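/- The linear map s: ℂ² → ℂ² given by s(a,b) = ((a+3b)/2, (a−b)/2) is an involution (s² = id), and together with t(a,b) = (a,−b) it generates a dihedral group of order 12; moreover both s and t preserve the quadratic form a² + 3b². -/

import Mathlib

noncomputable section

/-- The linear map `s : (a,b) ↦ ((a+3b)/2, (a−b)/2)` on `ℂ²`. -/
def sMap : (ℂ × ℂ) →ₗ[ℂ] (ℂ × ℂ) where
  toFun p := ((p.1 + 3 * p.2) / 2, (p.1 - p.2) / 2)
  map_add' p q := by
    simp only [Prod.fst_add, Prod.snd_add, Prod.mk_add_mk, Prod.mk.injEq]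
    constructor <;> ring
  map_smul' c p := by
    simp only [Prod.smul_fst, Prod.smul_snd, smul_eq_mul, Prod.smul_mk, RingHom.id_apply,
      Prod.mk.injEq]
    constructor <;> ring

lemma sMap_involutive : Function.Involutive sMap := by
  intro p
  simp only [sMap, LinearMap.coe_mk, AddHom.coe_mk]
  rw [Prod.ext_iff]
  constructor <;> · simp; ring

/-- The linear map `t : (a,b) ↦ (a, −b)` on `ℂ²`. -/
def tMap : (ℂ × ℂ) →ₗ[ℂ] (ℂ × ℂ) where
  toFun p := (p.1, -p.2)
  map_add' p q := by
    simp only [Prod.fst_add, Prod.snd_add, Prod.mk_add_mk, Prod.mk.injEq]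
    (try constructor) <;> (try simp) <;> ring
  map_smul' c p := by
    simp only [Prod.smul_fst, Prod.smul_snd, smul_eq_mul, Prod.smul_mk, RingHom.id_apply,
      Prod.mk.injEq]
    (try constructor) <;> (try simp) <;> ring

lemma tMap_involutive : Function.Involutive tMap := by
  intro p
  simp [tMap]

/-- `s` as a linear automorphism of `ℂ²`. -/
def sEquiv : (ℂ × ℂ) ≃ₗ[ℂ] (ℂ × ℂ) := LinearEquiv.ofInvolutive sMap sMap_involutive

/-- `t` as a linear automorphism of `ℂ²`. -/
def tEquiv : (ℂ × ℂ) ≃ₗ[ℂ] (ℂ × ℂ) := LinearEquiv.ofInvolutive tMap tMap_involutive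

/-! `s t` acts by `(a, b) ↦ ((a - 3b)/2, (a + b)/2)`, whose cube is `-1`, so it has order `6`.
For involutions `s, t` and `u = s t`, right multiplication by `s = u t` or by `t` preserves
`⟨u⟩ ∪ ⟨u⟩ t` because `t u t = u⁻¹`; and `t ∉ ⟨u⟩`, since otherwise `t` commutes with `u`,
forcing `u² = 1`. So `⟨u⟩` has index `2` in `⟨s, t⟩`, which therefore has order `2 · 6`. -/

namespace Subgroup

variable {G : Type*} [Group G] {s t : G}

theorem mem_zpowers_or_mul_mem_zpowers_of_mem_closure_pair (hs : s * s = 1) (ht : t * t = 1)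
    {x : G} (hx : x ∈ closure {s, t}) :
    x ∈ zpowers (s * t) ∨ x * t ∈ zpowers (s * t) := by
  have mul_s : ∀ x, x ∈ zpowers (s * t) ∨ x * t ∈ zpowers (s * t) →
      x * s ∈ zpowers (s * t) ∨ x * s * t ∈ zpowers (s * t) := by
    rintro x (h | h)
    · exact Or.inr (by rw [mul_assoc]; exact mul_mem h (mem_zpowers _))
    · have hxs : x * s = x * t * (s * t)⁻¹ := by
        rw [mul_inv_rev, inv_eq_of_mul_eq_one_right hs]
        group
      exact Or.inl (hxs ▸ mul_mem h (inv_mem (mem_zpowers _)))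
  have mul_t : ∀ x, x ∈ zpowers (s * t) ∨ x * t ∈ zpowers (s * t) →
      x * t ∈ zpowers (s * t) ∨ x * t * t ∈ zpowers (s * t) := by
    rintro x (h | h)
    · exact Or.inr (by rwa [mul_assoc, ht, mul_one])
    · exact Or.inl h
  induction hx using closure_induction_right with
  | one => exact Or.inl (one_mem _)
  | mul_right x _ y hy ih =>
    obtain rfl | rfl := hy
    exacts [mul_s x ih, mul_t x ih]
  | mul_inv_cancel x _ y hy ih =>
    obtain rfl | rfl := hy
    · rw [inv_eq_of_mul_eq_one_right hs]; exact mul_s x ih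
    · rw [inv_eq_of_mul_eq_one_right ht]; exact mul_t x ih

theorem notMem_zpowers_mul_of_sq_ne_one (hs : s * s = 1) (ht : t * t = 1)
    (hst : (s * t) ^ 2 ≠ 1) : t ∉ zpowers (s * t) := by
  intro h
  obtain ⟨k, hk⟩ := mem_zpowers_iff.mp h
  have hcomm : Commute ((s * t) ^ k) (s * t) := (Commute.refl _).zpow_left k
  rw [hk] at hcomm
  apply hst
  rw [sq, mul_assoc, hcomm.eq, mul_assoc s t t, ht, mul_one, hs]

theorem relIndex_zpowers_mul_closure_pair (hs : s * s = 1) (ht : t * t = 1)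
    (hst : (s * t) ^ 2 ≠ 1) : (zpowers (s * t)).relIndex (closure {s, t}) = 2 := by
  have htu := notMem_zpowers_mul_of_sq_ne_one hs ht hst
  rw [relIndex_eq_two_iff]
  refine ⟨t, subset_closure (by simp), fun x hx => ?_⟩
  rcases mem_zpowers_or_mul_mem_zpowers_of_mem_closure_pair hs ht hx with h | h
  · refine Or.inr ⟨h, fun hxt => htu ?_⟩
    simpa using mul_mem (inv_mem h) hxt
  · refine Or.inl ⟨h, fun hx' => htu ?_⟩
    simpa using mul_mem (inv_mem hx') h

theorem card_closure_pair_eq_two_mul_orderOf (hs : s * s = 1) (ht : t * t = 1)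
    (hst : (s * t) ^ 2 ≠ 1) : Nat.card (closure {s, t}) = 2 * orderOf (s * t) := by
  have hle : zpowers (s * t) ≤ closure {s, t} :=
    zpowers_le.mpr (mul_mem (subset_closure (by simp)) (subset_closure (by simp)))
  have hcard := relIndex_mul_relIndex _ _ _ bot_le hle
  rw [relIndex_bot_left, relIndex_bot_left, Nat.card_zpowers,
    relIndex_zpowers_mul_closure_pair hs ht hst] at hcard
  rw [← hcard, mul_comm]

end Subgroup

theorem sEquiv_mul_self : sEquiv * sEquiv = 1 := LinearEquiv.ext sMap_involutive

theorem tEquiv_mul_self : tEquiv * tEquiv = 1 := LinearEquiv.ext tMap_involutive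

theorem sEquiv_tEquiv_apply (a b : ℂ) :
    sEquiv (tEquiv (a, b)) = ((a - 3 * b) / 2, (a + b) / 2) := by
  change sMap (tMap (a, b)) = _
  simp only [sMap, tMap, LinearMap.coe_mk, AddHom.coe_mk, Prod.mk.injEq]
  constructor <;> ring

theorem sEquiv_mul_tEquiv_pow_three_apply (p : ℂ × ℂ) : ((sEquiv * tEquiv) ^ 3) p = -p := by
  obtain ⟨a, b⟩ := p
  simp only [pow_succ, pow_zero, one_mul, LinearEquiv.mul_apply, sEquiv_tEquiv_apply,
    Prod.neg_mk, Prod.mk.injEq]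
  constructor <;> ring

theorem orderOf_sEquiv_mul_tEquiv : orderOf (sEquiv * tEquiv) = 6 := by
  have h6 : (sEquiv * tEquiv) ^ 6 = 1 := LinearEquiv.ext fun p => by
    rw [show 6 = 3 + 3 from rfl, pow_add, LinearEquiv.mul_apply,
      sEquiv_mul_tEquiv_pow_three_apply, sEquiv_mul_tEquiv_pow_three_apply, neg_neg]
    rfl
  refine orderOf_eq_of_pow_and_pow_div_prime (by norm_num) h6 fun p hp hp6 h => ?_
  have hp23 : p = 2 ∨ p = 3 := by
    rcases (Nat.Prime.dvd_mul hp).mp (show p ∣ 2 * 3 from hp6) with h2 | h3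
    · exact Or.inl ((Nat.prime_dvd_prime_iff_eq hp Nat.prime_two).mp h2)
    · exact Or.inr ((Nat.prime_dvd_prime_iff_eq hp Nat.prime_three).mp h3)
  rcases hp23 with rfl | rfl
  · have h10 := congrArg (· (1, 0)) h
    rw [show 6 / 2 = 3 from rfl, sEquiv_mul_tEquiv_pow_three_apply] at h10
    norm_num [Prod.ext_iff] at h10
  · have h10 := congrArg (fun e => (e (1, 0)).1) h
    simp only [show 6 / 3 = 1 + 1 from rfl, pow_succ, pow_zero, one_mul, LinearEquiv.mul_apply,
      sEquiv_tEquiv_apply] at h10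
    norm_num at h10

/-- `s` is an involution; together with `t` it generates a dihedral
group of order 12 (two involutions whose product has order 6), and both `s` and `t`
preserve the quadratic form `a² + 3b²`. -/
theorem stmt_7 :
    Function.Involutive sEquiv ∧ Function.Involutive tEquiv ∧
    orderOf (sEquiv * tEquiv) = 6 ∧
    Nat.card (Subgroup.closure ({sEquiv, tEquiv} : Set ((ℂ × ℂ) ≃ₗ[ℂ] (ℂ × ℂ)))) = 12 ∧
    (∀ a b : ℂ, (sEquiv (a, b)).1 ^ 2 + 3 * (sEquiv (a, b)).2 ^ 2 = a ^ 2 + 3 * b ^ 2) ∧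
    (∀ a b : ℂ, (tEquiv (a, b)).1 ^ 2 + 3 * (tEquiv (a, b)).2 ^ 2 = a ^ 2 + 3 * b ^ 2) := by
  refine ⟨sMap_involutive, tMap_involutive, orderOf_sEquiv_mul_tEquiv, ?_, fun a b => ?_,
    fun a b => ?_⟩
  · have hsq : (sEquiv * tEquiv) ^ 2 ≠ 1 := fun h => by
      have := orderOf_dvd_of_pow_eq_one h
      rw [orderOf_sEquiv_mul_tEquiv] at this
      norm_num at this
    rw [Subgroup.card_closure_pair_eq_two_mul_orderOf sEquiv_mul_self tEquiv_mul_self hsq,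
      orderOf_sEquiv_mul_tEquiv]
  · change ((a + 3 * b) / 2) ^ 2 + 3 * ((a - b) / 2) ^ 2 = _
    ring
  · change a ^ 2 + 3 * (-b) ^ 2 = _
    ring
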